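/- Let X be multivariate normal on R^n with mean x0 and covariance Σ, and let gL(x) = A^L x + d^L, gU(x) = A^U x + d^U be affine functions with gL ≤ g ≤ gU pointwise for a measurable g : R^n → R. Define μ_L = A^L x0 + d^L, σ_L² = A^L Σ (A^L)ᵀ, μ_U = A^U x0 + d^U, σ_U² = A^U Σ (A^U)ᵀ, and assume σ_L, σ_U > 0. Then for any a ∈ R, 1/2 − (1/2) erf((a − μ_L)/(σ_L√2)) ≤ P[g(X) > a] ≤ 1/2 − (1/2) erf((a − μ_U)/(σ_U√2)). -/

import Mathlib

open MeasureTheory ProbabilityTheory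

/-- The Gauss error function. -/
noncomputable def erf (x : ℝ) : ℝ := (2 / Real.sqrt Real.pi) * ∫ t in (0:ℝ)..x, Real.exp (-t ^ 2)

/-- `X` is multivariate Gaussian with mean `x0` and covariance `S` iff every linear
functional of `X` is a real Gaussian with the corresponding mean and variance. -/
def IsMultivariateGaussian {Ω : Type*} [MeasurableSpace Ω] (μ : Measure Ω)
    {n : ℕ} (X : Ω → Fin n → ℝ) (x0 : Fin n → ℝ) (S : Matrix (Fin n) (Fin n) ℝ) : Prop :=
  ∀ w : Fin n → ℝ,
    Measure.map (fun ω => ∑ i, w i * X ω i) μ =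
      gaussianReal (∑ i, w i * x0 i) (Real.toNNReal (∑ i, ∑ j, w i * S i j * w j))

/-! Each affine bound `∑ i, w i * X ω i + d` is a real Gaussian, and `gaussianReal m σ²` is the
image under `t ↦ σ √2 t + m` of `gaussianReal 0 (1/2)`, whose density `exp (-t²) / √π` is the
integrand of `erf`; so the tail probabilities of the two affine bounds are the two erf expressions.
The sandwich `gL ≤ g ≤ gU` traps the event `{a < g (X ω)}` between these two tail events. -/

open Set Real

theorem integral_Ioi_exp_neg_sq (z : ℝ) :
    ∫ t in Ioi z, exp (-t ^ 2) = √π / 2 * (1 - erf z) := by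
  have hint : Integrable fun t : ℝ => exp (-t ^ 2) := by
    simpa using integrable_exp_neg_mul_sq one_pos
  have hhalf : ∫ t in Ioi (0 : ℝ), exp (-t ^ 2) = √π / 2 := by
    simpa using integral_gaussian_Ioi 1
  have hsplit := intervalIntegral.integral_Ioi_sub_Ioi' hint.integrableOn hint.integrableOn
    (a := 0) (b := z)
  have hπ : √π ≠ 0 := (sqrt_pos.mpr pi_pos).ne'
  rw [erf]
  field_simp
  linarith

theorem gaussianPDFReal_zero_half (x : ℝ) : gaussianPDFReal 0 2⁻¹ x = (√π)⁻¹ * exp (-x ^ 2) := by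
  simp only [gaussianPDFReal, NNReal.coe_inv, NNReal.coe_ofNat, sub_zero]
  field_simp

theorem toReal_gaussianReal_zero_half_Ioi (z : ℝ) :
    (gaussianReal 0 2⁻¹ (Ioi z)).toReal = 1 / 2 - 1 / 2 * erf z := by
  rw [gaussianReal_apply_eq_integral _ (by norm_num),
    ENNReal.toReal_ofReal (integral_nonneg fun x => gaussianPDFReal_nonneg _ _ _)]
  simp only [gaussianPDFReal_zero_half, integral_const_mul, integral_Ioi_exp_neg_sq]
  field_simp

theorem gaussianReal_eq_map_zero_half {σ : ℝ} (m : ℝ) (hσ : 0 ≤ σ) :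
    gaussianReal m (σ ^ 2).toNNReal = (gaussianReal 0 2⁻¹).map (fun t => σ * √2 * t + m) := by
  rw [show (fun t => σ * √2 * t + m) = (· + m) ∘ (σ * √2 * ·) from rfl,
    ← Measure.map_map (by fun_prop) (by fun_prop), gaussianReal_map_const_mul,
    gaussianReal_map_add_const]
  congr 1
  · ring
  · ext
    simp [mul_pow, hσ]

theorem toReal_gaussianReal_Ioi {σ : ℝ} (m a : ℝ) (hσ : 0 < σ) :
    (gaussianReal m (σ ^ 2).toNNReal (Ioi a)).toReal
      = 1 / 2 - 1 / 2 * erf ((a - m) / (σ * √2)) := by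
  have hc : 0 < σ * √2 := by positivity
  have hpre : (fun t => σ * √2 * t + m) ⁻¹' Ioi a = Ioi ((a - m) / (σ * √2)) := by
    ext t
    simp only [mem_preimage, mem_Ioi, div_lt_iff₀ hc]
    constructor <;> intro h <;> linarith
  rw [gaussianReal_eq_map_zero_half m hσ.le, Measure.map_apply (by fun_prop) measurableSet_Ioi,
    hpre, toReal_gaussianReal_zero_half_Ioi]

theorem IsMultivariateGaussian.toReal_measure_affine_gt {Ω : Type*} [MeasurableSpace Ω]
    {μ : Measure Ω} {n : ℕ} {X : Ω → Fin n → ℝ} {x0 : Fin n → ℝ}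
    {S : Matrix (Fin n) (Fin n) ℝ} (hGauss : IsMultivariateGaussian μ X x0 S) (hX : Measurable X)
    (w : Fin n → ℝ) (d : ℝ) {σ : ℝ} (hσ : 0 < σ) (hσ2 : σ ^ 2 = ∑ i, ∑ j, w i * S i j * w j)
    (a : ℝ) :
    (μ {ω | a < (∑ i, w i * X ω i) + d}).toReal
      = 1 / 2 - 1 / 2 * erf ((a - ((∑ i, w i * x0 i) + d)) / (σ * √2)) := by
  have hpre : {ω | a < (∑ i, w i * X ω i) + d} = (fun ω => ∑ i, w i * X ω i) ⁻¹' Ioi (a - d) := by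
    ext ω
    exact (sub_lt_iff_lt_add (a := a)).symm
  rw [hpre, ← Measure.map_apply (by fun_prop) measurableSet_Ioi, hGauss w, ← hσ2,
    toReal_gaussianReal_Ioi _ _ hσ, sub_sub, add_comm d]

theorem stmt_8_general {Ω : Type*} [MeasurableSpace Ω] (μ : Measure Ω) [IsProbabilityMeasure μ]
    {n : ℕ} (X : Ω → Fin n → ℝ) (hX : Measurable X)
    (x0 : Fin n → ℝ) (S : Matrix (Fin n) (Fin n) ℝ)
    (hGauss : IsMultivariateGaussian μ X x0 S)
    (g : (Fin n → ℝ) → ℝ)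
    (AL AU : Fin n → ℝ) (dL dU : ℝ)
    (hle : ∀ x : Fin n → ℝ, (∑ i, AL i * x i) + dL ≤ g x ∧ g x ≤ (∑ i, AU i * x i) + dU)
    (σL σU : ℝ) (hσL : 0 < σL) (hσU : 0 < σU)
    (hσL2 : σL ^ 2 = ∑ i, ∑ j, AL i * S i j * AL j)
    (hσU2 : σU ^ 2 = ∑ i, ∑ j, AU i * S i j * AU j) (a : ℝ) :
    1 / 2 - 1 / 2 * erf ((a - ((∑ i, AL i * x0 i) + dL)) / (σL * Real.sqrt 2))
      ≤ (μ {ω | a < g (X ω)}).toReal ∧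
    (μ {ω | a < g (X ω)}).toReal
      ≤ 1 / 2 - 1 / 2 * erf ((a - ((∑ i, AU i * x0 i) + dU)) / (σU * Real.sqrt 2)) := by
  rw [← hGauss.toReal_measure_affine_gt hX AL dL hσL hσL2,
    ← hGauss.toReal_measure_affine_gt hX AU dU hσU hσU2]
  exact ⟨ENNReal.toReal_mono (measure_ne_top _ _)
      (measure_mono fun ω h => lt_of_lt_of_le h (hle (X ω)).1),
    ENNReal.toReal_mono (measure_ne_top _ _)
      (measure_mono fun ω h => lt_of_lt_of_le h (hle (X ω)).2)⟩

theorem stmt_8 {Ω : Type*} [MeasurableSpace Ω] (μ : Measure Ω) [IsProbabilityMeasure μ]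
    {n : ℕ} (X : Ω → Fin n → ℝ) (hX : Measurable X)
    (x0 : Fin n → ℝ) (S : Matrix (Fin n) (Fin n) ℝ) (hS : S.PosSemidef)
    (hGauss : IsMultivariateGaussian μ X x0 S)
    (g : (Fin n → ℝ) → ℝ) (hg : Measurable g)
    (AL AU : Fin n → ℝ) (dL dU : ℝ)
    (hle : ∀ x : Fin n → ℝ, (∑ i, AL i * x i) + dL ≤ g x ∧ g x ≤ (∑ i, AU i * x i) + dU)
    (σL σU : ℝ) (hσL : 0 < σL) (hσU : 0 < σU)
    (hσL2 : σL ^ 2 = ∑ i, ∑ j, AL i * S i j * AL j)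
    (hσU2 : σU ^ 2 = ∑ i, ∑ j, AU i * S i j * AU j) (a : ℝ) :
    1 / 2 - 1 / 2 * erf ((a - ((∑ i, AL i * x0 i) + dL)) / (σL * Real.sqrt 2))
      ≤ (μ {ω | a < g (X ω)}).toReal ∧
    (μ {ω | a < g (X ω)}).toReal
      ≤ 1 / 2 - 1 / 2 * erf ((a - ((∑ i, AU i * x0 i) + dU)) / (σU * Real.sqrt 2)) :=
  stmt_8_general μ X hX x0 S hGauss g AL AU dL dU hle σL σU hσL hσU hσL2 hσU2 a
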